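/- arXiv:1902.02131 — 2 statements merged into one kernel-verified Lean document; each statement's English description precedes it below -/
import Mathlib

section
/- Suppose for each i the Grundy-value sequence G_{S_i} of the subtraction game Subtraction(S_i) is the h-stair of some sequence a_i, i.e. G_{S_i}(xh+r) = a_i(x)·h + r for all x ≥ 0 and 0 ≤ r < h. Then the Grundy value of a position (x_1,...,x_n) in the generalized cyclic Nimhoff GCN(h; S_1,...,S_n) equals (⊕_i ⌊G_{S_i}(x_i)/h⌋)·h + ((Σ_i x_i) mod h). -/
/-!
Let `F x = (⊕ᵢ ⌊G_{Sᵢ}(xᵢ)/h⌋)·h + (Σᵢ xᵢ mod h)`. It suffices that no move preserves `F` and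
that every value below `F x` is the value of a move from `x`. Since `G_{Sᵢ}` is an `h`-stair,
`G_{Sᵢ}(z) = ⌊G_{Sᵢ}(z)/h⌋·h + (z mod h)`. A move in heap `i` preserving `F` would preserve the
nim-sum of the quotients and the residue of the total, hence `G_{Sᵢ}(xᵢ)`, which is impossible;
a cyclic move changes the total by less than `h`, hence changes its residue. Conversely, a
value `B·h + t` whose quotient `B` is the nim-sum is reached by a cyclic move taking tokens
only from the residues `xᵢ mod h`; if `B` is smaller, the nim move on the quotients picks a heap
`i`, and a move of `Subtraction(Sᵢ)` realises there the value `B'·h + r` prescribed by nim,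
with `r` chosen so that the total gets residue `t`.
-/

open Finset

/-- mex of a set of naturals. -/
noncomputable def mex (T : Set ℕ) : ℕ := sInf Tᶜ

/-- Grundy value of the subtraction game Subtraction(S) on a heap of size x. -/
noncomputable def subG (S : Set ℕ) (x : ℕ) : ℕ :=
  mex {g | ∃ s, ∃ _ : s ∈ S ∧ 0 < s ∧ s ≤ x, g = subG S (x - s)}
termination_by x
decreasing_by rename_i hs; obtain ⟨_, h1, h2⟩ := hs; omega

/-- Moves of the generalized cyclic Nimhoff GCN(h; S_1, ..., S_n). -/
def gcnMove {n : ℕ} (h : ℕ) (S : Fin n → Set ℕ) (x y : Fin n → ℕ) : Prop :=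
  (∃ i, ∃ s, s ∈ S i ∧ 0 < s ∧ s ≤ x i ∧ y = Function.update x i (x i - s)) ∨
  (∃ s : Fin n → ℕ, (∀ i, s i ≤ x i) ∧ 0 < ∑ i, s i ∧ ∑ i, s i < h ∧
    y = fun i => x i - s i)

theorem gcnMove_sum_lt {n h : ℕ} {S : Fin n → Set ℕ} {x y : Fin n → ℕ}
    (m : gcnMove h S x y) : ∑ i, y i < ∑ i, x i := by
  rcases m with ⟨i, s, _, hs0, hsx, rfl⟩ | ⟨s, hle, hpos, _, rfl⟩
  · refine Finset.sum_lt_sum (fun j _ => ?_) ⟨i, Finset.mem_univ i, ?_⟩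
    · by_cases hj : j = i
      · subst hj; simp [Function.update]
      · simp [Function.update, hj]
    · simp [Function.update]; omega
  · obtain ⟨i, _, hi⟩ := Finset.exists_ne_zero_of_sum_ne_zero (by omega :
      ∑ i, s i ≠ 0)
    refine Finset.sum_lt_sum (fun j _ => by omega) ⟨i, Finset.mem_univ i, ?_⟩
    have := hle i; omega

/-- Grundy value of a position of the generalized cyclic Nimhoff. -/
noncomputable def gcnGrundy (n h : ℕ) (S : Fin n → Set ℕ) (x : Fin n → ℕ) : ℕ :=
  mex {g | ∃ y, ∃ _ : gcnMove h S x y, g = gcnGrundy n h S y}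
termination_by ∑ i, x i
decreasing_by exact gcnMove_sum_lt ‹_›

theorem mex_eq_of_notMem_of_forall_lt_mem {T : Set ℕ} {v : ℕ} (hv : v ∉ T)
    (hlt : ∀ k < v, k ∈ T) : mex T = v :=
  le_antisymm (Nat.sInf_le hv) <| le_csInf ⟨v, hv⟩ fun _ hm => not_lt.1 fun hk => hm (hlt _ hk)

theorem mem_of_lt_mex {T : Set ℕ} {k : ℕ} (hk : k < mex T) : k ∈ T :=
  not_not.1 (Nat.notMem_of_lt_sInf hk)

theorem mex_notMem_of_finite {T : Set ℕ} (hT : T.Finite) : mex T ∉ T :=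
  Nat.sInf_mem hT.infinite_compl.nonempty

theorem subG_eq_mex (S : Set ℕ) (x : ℕ) :
    subG S x = mex {g | ∃ s, ∃ _ : s ∈ S ∧ 0 < s ∧ s ≤ x, g = subG S (x - s)} := by
  rw [subG]

theorem subG_sub_ne {S : Set ℕ} {x s : ℕ} (hs : s ∈ S) (h0 : 0 < s) (hsx : s ≤ x) :
    subG S (x - s) ≠ subG S x := by
  have hfin : {g | ∃ s, ∃ _ : s ∈ S ∧ 0 < s ∧ s ≤ x, g = subG S (x - s)}.Finite :=
    ((Set.finite_Iic x).image (subG S)).subset <| by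
      rintro _ ⟨s, -, rfl⟩
      exact ⟨x - s, Set.mem_Iic.2 (Nat.sub_le x s), rfl⟩
  intro he
  apply mex_notMem_of_finite hfin
  rw [← subG_eq_mex]
  exact ⟨s, ⟨hs, h0, hsx⟩, he.symm⟩

theorem exists_subG_sub_eq_of_lt {S : Set ℕ} {x g : ℕ} (hg : g < subG S x) :
    ∃ s ∈ S, 0 < s ∧ s ≤ x ∧ subG S (x - s) = g := by
  rw [subG_eq_mex] at hg
  obtain ⟨s, ⟨hs, h0, hsx⟩, he⟩ := mem_of_lt_mex hg
  exact ⟨s, hs, h0, hsx, he.symm⟩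

def IsStair (h : ℕ) (a g : ℕ → ℕ) : Prop :=
  ∀ x r, r < h → g (x * h + r) = a x * h + r

namespace IsStair

variable {h : ℕ} {a g : ℕ → ℕ}

theorem apply_eq (hg : IsStair h a g) (hh : 0 < h) (z : ℕ) :
    g z = a (z / h) * h + z % h := by
  conv_lhs => rw [← Nat.div_add_mod' z h]
  exact hg _ _ (Nat.mod_lt z hh)

theorem apply_div (hg : IsStair h a g) (hh : 0 < h) (z : ℕ) : g z / h = a (z / h) := by
  rw [hg.apply_eq hh, Nat.mul_comm, Nat.mul_add_div hh, Nat.div_eq_of_lt (Nat.mod_lt z hh),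
    Nat.add_zero]

theorem apply_eq_div_mul_add_mod (hg : IsStair h a g) (hh : 0 < h) (z : ℕ) :
    g z = g z / h * h + z % h := by
  rw [hg.apply_div hh, ← hg.apply_eq hh]

end IsStair

theorem Nat.mul_add_eq_mul_add_iff {h q₁ r₁ q₂ r₂ : ℕ} (hr₁ : r₁ < h) (hr₂ : r₂ < h) :
    q₁ * h + r₁ = q₂ * h + r₂ ↔ q₁ = q₂ ∧ r₁ = r₂ := by
  refine ⟨fun he => ?_, fun ⟨hq, hr⟩ => hq ▸ hr ▸ rfl⟩
  have hh : 0 < h := by omega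
  have hdivmod : ∀ q r, r < h → (q * h + r) / h = q ∧ (q * h + r) % h = r := fun q r hr =>
    (Nat.div_mod_unique hh).2 ⟨by ring, hr⟩
  obtain ⟨hq₁, hr₁'⟩ := hdivmod q₁ r₁ hr₁
  obtain ⟨hq₂, hr₂'⟩ := hdivmod q₂ r₂ hr₂
  rw [he] at hq₁ hr₁'
  exact ⟨hq₁.symm.trans hq₂, hr₁'.symm.trans hr₂'⟩

theorem Nat.sub_div_eq_of_le_mod {x s h : ℕ} (hh : 0 < h) (hs : s ≤ x % h) :
    (x - s) / h = x / h := by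
  have hx := Nat.div_add_mod' x h
  have hxh := Nat.mod_lt x hh
  rw [Nat.div_eq_iff hh]
  omega

theorem Nat.exists_lt_add_mod_eq {h t : ℕ} (ht : t < h) (c : ℕ) : ∃ r < h, (r + c) % h = t := by
  have hh : 0 < h := by omega
  refine ⟨(t + (h - c % h)) % h, Nat.mod_lt _ hh, ?_⟩
  have hc := Nat.div_add_mod' c h
  have hch := Nat.mod_lt c hh
  have hsum : t + (h - c % h) + c = t + (c / h + 1) * h := by
    rw [Nat.add_mul, Nat.one_mul]
    omega
  rw [Nat.mod_add_mod, hsum, Nat.add_mul_mod_self_right, Nat.mod_eq_of_lt ht]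

namespace Finset

variable {ι : Type*} [DecidableEq ι]

theorem fold_xor_eq_xor_fold_erase {s : Finset ι} (f : ι → ℕ) {i : ι} (hi : i ∈ s) :
    s.fold (· ^^^ · : ℕ → ℕ → ℕ) 0 f = f i ^^^ (s.erase i).fold (· ^^^ · : ℕ → ℕ → ℕ) 0 f := by
  conv_lhs => rw [← insert_erase hi]
  exact fold_insert (notMem_erase i s)

theorem fold_xor_update {s : Finset ι} (f : ι → ℕ) {i : ι} (hi : i ∈ s) (b : ℕ) :
    s.fold (· ^^^ · : ℕ → ℕ → ℕ) 0 (Function.update f i b) =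
      b ^^^ (s.erase i).fold (· ^^^ · : ℕ → ℕ → ℕ) 0 f := by
  rw [fold_xor_eq_xor_fold_erase _ hi, Function.update_self,
    fold_congr fun j hj => Function.update_of_ne (ne_of_mem_erase hj) b f]

theorem exists_xor_fold_erase_lt_of_lt_fold_xor {s : Finset ι} {f : ι → ℕ} {B : ℕ}
    (hB : B < s.fold (· ^^^ · : ℕ → ℕ → ℕ) 0 f) :
    ∃ i ∈ s, B ^^^ (s.erase i).fold (· ^^^ · : ℕ → ℕ → ℕ) 0 f < f i := by
  induction s using Finset.induction generalizing B with
  | empty => simp at hB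
  | @insert a s ha ih =>
    rw [fold_insert ha] at hB
    rcases Nat.lt_xor_cases hB with hlt | hlt
    · exact ⟨a, mem_insert_self a s, by rwa [erase_insert ha]⟩
    · obtain ⟨i, hi, hlt⟩ := ih hlt
      have hai : a ≠ i := fun h => ha (h ▸ hi)
      refine ⟨i, mem_insert_of_mem hi, ?_⟩
      rwa [erase_insert_of_ne hai, fold_insert fun h => ha (mem_of_mem_erase h), ← Nat.xor_assoc]

theorem exists_le_sum_eq_of_le_sum (s : Finset ι) {f : ι → ℕ} {m : ℕ}
    (hm : m ≤ ∑ i ∈ s, f i) : ∃ g : ι → ℕ, (∀ i, g i ≤ f i) ∧ ∑ i ∈ s, g i = m := by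
  induction s using Finset.induction generalizing m with
  | empty => exact ⟨0, fun _ => Nat.zero_le _, by simpa using (Nat.le_zero.1 hm).symm⟩
  | @insert a s ha ih =>
    rw [sum_insert ha] at hm
    obtain ⟨g, hg, hsum⟩ := ih (m := m - min m (f a)) (by omega)
    refine ⟨Function.update g a (min m (f a)), fun i => ?_, ?_⟩
    · rcases eq_or_ne i a with rfl | hi
      · simp
      · rw [Function.update_of_ne hi]; exact hg i
    · rw [sum_insert ha, Function.update_self,
        sum_congr rfl fun j hj => Function.update_of_ne (ne_of_mem_of_not_mem hj ha) _ _, hsum]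
      omega

end Finset

noncomputable def gcnStairValue (n h : ℕ) (S : Fin n → Set ℕ) (x : Fin n → ℕ) : ℕ :=
  (univ.fold (· ^^^ · : ℕ → ℕ → ℕ) 0 fun i => subG (S i) (x i) / h) * h + (∑ i, x i) % h

theorem gcnGrundy_eq_of_forall {n h : ℕ} {S : Fin n → Set ℕ} {F : (Fin n → ℕ) → ℕ}
    (hne : ∀ x y, gcnMove h S x y → F y ≠ F x)
    (hex : ∀ x g, g < F x → ∃ y, gcnMove h S x y ∧ F y = g) (x : Fin n → ℕ) :
    gcnGrundy n h S x = F x := by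
  induction hN : ∑ i, x i using Nat.strong_induction_on generalizing x with
  | _ N ih =>
    have ih' : ∀ y, gcnMove h S x y → gcnGrundy n h S y = F y := fun y m =>
      ih _ (hN ▸ gcnMove_sum_lt m) y rfl
    rw [gcnGrundy]
    refine mex_eq_of_notMem_of_forall_lt_mem ?_ fun g hg => ?_
    · rintro ⟨y, m, hy⟩
      exact hne x y m (by rw [← ih' y m, hy])
    · obtain ⟨y, m, rfl⟩ := hex x g hg
      exact ⟨y, m, (ih' y m).symm⟩

section

variable {n h : ℕ} {S : Fin n → Set ℕ} {a : Fin n → ℕ → ℕ}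

theorem gcnStairValue_update_ne (hh : 0 < h) (hstair : ∀ i, IsStair h (a i) (subG (S i)))
    {x : Fin n → ℕ} {i : Fin n} {s : ℕ} (hs : s ∈ S i) (h0 : 0 < s) (hsx : s ≤ x i) :
    gcnStairValue n h S (Function.update x i (x i - s)) ≠ gcnStairValue n h S x := by
  intro he
  rw [gcnStairValue, gcnStairValue,
    funext fun j => Function.apply_update (fun j z => subG (S j) z / h) x i (x i - s) j,
    Nat.mul_add_eq_mul_add_iff (Nat.mod_lt _ hh) (Nat.mod_lt _ hh),
    fold_xor_update _ (mem_univ i), fold_xor_eq_xor_fold_erase _ (mem_univ i), Nat.xor_left_inj,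
    sum_update_of_mem (mem_univ i), sum_eq_add_sum_sdiff_singleton_of_mem (mem_univ i)] at he
  obtain ⟨hdiv, hmod⟩ := he
  apply subG_sub_ne hs h0 hsx
  rw [(hstair i).apply_eq_div_mul_add_mod hh, hdiv, Nat.ModEq.add_right_cancel' _ hmod,
    ← (hstair i).apply_eq_div_mul_add_mod hh]

theorem gcnStairValue_sub_ne (hh : 0 < h) {x s : Fin n → ℕ} (hle : ∀ i, s i ≤ x i)
    (hpos : 0 < ∑ i, s i) (hlt : ∑ i, s i < h) :
    gcnStairValue n h S (fun i => x i - s i) ≠ gcnStairValue n h S x := by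
  intro he
  have hmod := ((Nat.mul_add_eq_mul_add_iff (Nat.mod_lt _ hh) (Nat.mod_lt _ hh)).1 he).2
  have hsum : ∑ i, (x i - s i) + ∑ i, s i = ∑ i, x i := by
    rw [sum_tsub_distrib _ fun i _ => hle i]
    exact Nat.sub_add_cancel (sum_le_sum fun i _ => hle i)
  rw [← hsum] at hmod
  have hdvd := (Nat.modEq_iff_dvd' (Nat.le_add_right _ _)).1 hmod
  rw [Nat.add_sub_cancel_left] at hdvd
  exact absurd (Nat.le_of_dvd hpos hdvd) (not_le.2 hlt)

theorem gcnStairValue_ne_of_gcnMove (hh : 0 < h) (hstair : ∀ i, IsStair h (a i) (subG (S i)))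
    {x y : Fin n → ℕ} (hxy : gcnMove h S x y) : gcnStairValue n h S y ≠ gcnStairValue n h S x := by
  rcases hxy with ⟨i, s, hs, h0, hsx, rfl⟩ | ⟨s, hle, hpos, hlt, rfl⟩
  · exact gcnStairValue_update_ne hh hstair hs h0 hsx
  · exact gcnStairValue_sub_ne hh hle hpos hlt

theorem exists_gcnMove_gcnStairValue_eq_of_lt_sum_mod (hh : 0 < h)
    (hstair : ∀ i, IsStair h (a i) (subG (S i))) {x : Fin n → ℕ} {t : ℕ}
    (ht : t < (∑ i, x i) % h) : ∃ y, gcnMove h S x y ∧ gcnStairValue n h S y =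
      (univ.fold (· ^^^ · : ℕ → ℕ → ℕ) 0 fun i => subG (S i) (x i) / h) * h + t := by
  have hR : (∑ i, x i) % h ≤ ∑ i, x i % h := by
    rw [sum_nat_mod]
    exact Nat.mod_le _ _
  obtain ⟨s, hs, hsum⟩ := exists_le_sum_eq_of_le_sum univ (f := fun i => x i % h)
    (m := (∑ i, x i) % h - t) (by omega)
  have hsx : ∀ i, s i ≤ x i := fun i => (hs i).trans (Nat.mod_le _ _)
  have hRh := Nat.mod_lt (∑ i, x i) hh
  refine ⟨fun i => x i - s i, Or.inr ⟨s, hsx, by omega, by omega, rfl⟩, ?_⟩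
  have hdiv : (fun i => subG (S i) (x i - s i) / h) = fun i => subG (S i) (x i) / h :=
    funext fun i => by
      rw [(hstair i).apply_div hh, (hstair i).apply_div hh, Nat.sub_div_eq_of_le_mod hh (hs i)]
  have hsub : ∑ i, (x i - s i) = (∑ i, x i) / h * h + t := by
    have := Nat.div_add_mod' (∑ i, x i) h
    rw [sum_tsub_distrib _ fun i _ => hsx i, hsum]
    omega
  rw [gcnStairValue, hdiv, hsub, Nat.mul_add_mod_of_lt (by omega)]

theorem exists_gcnMove_gcnStairValue_eq_of_lt_fold_xor (hh : 0 < h)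
    (hstair : ∀ i, IsStair h (a i) (subG (S i))) {x : Fin n → ℕ} {B t : ℕ}
    (hB : B < univ.fold (· ^^^ · : ℕ → ℕ → ℕ) 0 fun i => subG (S i) (x i) / h) (ht : t < h) :
    ∃ y, gcnMove h S x y ∧ gcnStairValue n h S y = B * h + t := by
  obtain ⟨i, -, hi⟩ := exists_xor_fold_erase_lt_of_lt_fold_xor hB
  set W := (univ.erase i).fold (· ^^^ · : ℕ → ℕ → ℕ) 0 fun j => subG (S j) (x j) / h
  obtain ⟨r, hr, hrt⟩ := Nat.exists_lt_add_mod_eq ht (∑ j ∈ univ \ {i}, x j)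
  have hlt : (B ^^^ W) * h + r < subG (S i) (x i) := by
    rw [(hstair i).apply_eq_div_mul_add_mod hh]
    calc (B ^^^ W) * h + r < ((B ^^^ W) + 1) * h := by rw [Nat.add_mul, Nat.one_mul]; omega
      _ ≤ subG (S i) (x i) / h * h := Nat.mul_le_mul_right _ hi.succ_le
      _ ≤ _ := Nat.le_add_right _ _
  obtain ⟨s, hs, h0, hsx, hg⟩ := exists_subG_sub_eq_of_lt hlt
  obtain ⟨hdiv, hmod⟩ := (Nat.mul_add_eq_mul_add_iff (Nat.mod_lt _ hh) hr).1 <|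
    ((hstair i).apply_eq_div_mul_add_mod hh _).symm.trans hg
  refine ⟨Function.update x i (x i - s), Or.inl ⟨i, s, hs, h0, hsx, rfl⟩, ?_⟩
  rw [gcnStairValue,
    funext fun j => Function.apply_update (fun j z => subG (S j) z / h) x i (x i - s) j,
    fold_xor_update _ (mem_univ i), hdiv, Nat.xor_assoc, Nat.xor_self, Nat.xor_zero,
    sum_update_of_mem (mem_univ i), ← Nat.mod_add_mod, hmod, hrt]

theorem exists_gcnMove_gcnStairValue_eq_of_lt (hh : 0 < h)
    (hstair : ∀ i, IsStair h (a i) (subG (S i))) {x : Fin n → ℕ} {g : ℕ}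
    (hg : g < gcnStairValue n h S x) : ∃ y, gcnMove h S x y ∧ gcnStairValue n h S y = g := by
  set A := univ.fold (· ^^^ · : ℕ → ℕ → ℕ) 0 fun i => subG (S i) (x i) / h
  have hg' : g < A * h + (∑ i, x i) % h := hg
  have hRh := Nat.mod_lt (∑ i, x i) hh
  have hgh := Nat.div_add_mod' g h
  have hBA : g / h ≤ A := Nat.lt_succ_iff.1 <|
    (Nat.div_lt_iff_lt_mul hh).2 (by rw [Nat.succ_mul]; omega)
  rw [← hgh]
  rcases hBA.lt_or_eq with hlt | heq
  · exact exists_gcnMove_gcnStairValue_eq_of_lt_fold_xor hh hstair hlt (Nat.mod_lt g hh)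
  · rw [heq] at hgh ⊢
    exact exists_gcnMove_gcnStairValue_eq_of_lt_sum_mod hh hstair (by omega)

end

theorem generalized_cyclic_nimhoff_grundy_general (n h : ℕ) (hh : 0 < h)
    (S : Fin n → Set ℕ) (a : Fin n → ℕ → ℕ)
    (hstair : ∀ i x r, r < h → subG (S i) (x * h + r) = a i x * h + r)
    (x : Fin n → ℕ) :
    gcnGrundy n h S x =
      (Finset.univ.fold (· ^^^ · : ℕ → ℕ → ℕ) 0 (fun i => subG (S i) (x i) / h)) * h +
        (∑ i, x i) % h :=
  gcnGrundy_eq_of_forall (fun _ _ => gcnStairValue_ne_of_gcnMove hh hstair)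
    (fun _ _ => exists_gcnMove_gcnStairValue_eq_of_lt hh hstair) x

/-- Grundy value of the generalized cyclic Nimhoff when each
subtraction game has an `h`-stair Grundy sequence. -/
theorem generalized_cyclic_nimhoff_grundy (n h : ℕ) (hh : 0 < h)
    (S : Fin n → Set ℕ) (hS : ∀ i, ∀ s ∈ S i, 0 < s) (a : Fin n → ℕ → ℕ)
    (hstair : ∀ i x r, r < h → subG (S i) (x * h + r) = a i x * h + r)
    (x : Fin n → ℕ) :
    gcnGrundy n h S x =
      (Finset.univ.fold (· ^^^ · : ℕ → ℕ → ℕ) 0 (fun i => subG (S i) (x i) / h)) * h +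
        (∑ i, x i) % h :=
  generalized_cyclic_nimhoff_grundy_general n h hh S a hstair x
end

section
/- Let h ≥ 1, and for each i = 1,...,n let q_i, r_i be nonnegative integers with r_i < h. Let Q = ⊕_i a_i(q_i) for given sequences a_i, and R = (Σ_i r_i) mod h. For any k' with 0 ≤ k' < R, there exist nonnegative integers k_1,...,k_n with k_i ≤ r_i for all i, and 0 < Σ_i k_i < h, such that (Σ_i (r_i - k_i)) mod h = k'. -/
/-! Take `k` with `k ≤ r` pointwise and `∑ k = (∑ r) % h - k'`, filling the heaps greedily one after
another. Then `0 < ∑ k < h`, and the remaining total `∑ r - ((∑ r) % h - k')` is `k'` plus a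
multiple of `h`. -/

open Finset

theorem Finset.exists_le_sum_eq {ι : Type*} (s : Finset ι) (r : ι → ℕ) {m : ℕ}
    (hm : m ≤ ∑ i ∈ s, r i) : ∃ k : ι → ℕ, (∀ i, k i ≤ r i) ∧ ∑ i ∈ s, k i = m := by
  classical
  induction s using Finset.induction_on generalizing m with
  | empty => exact ⟨0, fun _ => Nat.zero_le _, by simp_all⟩
  | insert a s ha ih =>
    rw [sum_insert ha] at hm
    obtain ⟨k, hkr, hks⟩ := ih (m := m - min m (r a)) (by omega)
    refine ⟨Function.update k a (min m (r a)), fun i => ?_, ?_⟩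
    · rcases eq_or_ne i a with rfl | hi
      · simp
      · simpa [hi] using hkr i
    · rw [sum_insert ha, sum_update_of_notMem ha, hks, Function.update_self]
      omega

theorem Nat.sub_sub_mod_mod_eq {S h k : ℕ} (hk : k < S % h) : (S - (S % h - k)) % h = k := by
  have hdiv := Nat.div_add_mod S h
  rw [show S - (S % h - k) = k + h * (S / h) by omega, Nat.add_mul_mod_self_left]
  rcases h.eq_zero_or_pos with rfl | hh
  · exact Nat.mod_zero k
  · exact Nat.mod_eq_of_lt (hk.trans (Nat.mod_lt S hh))

theorem cyclic_move_exists_general (n h : ℕ) (hh : 0 < h) (r : Fin n → ℕ)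
    (k' : ℕ) (hk : k' < (∑ i, r i) % h) :
    ∃ k : Fin n → ℕ, (∀ i, k i ≤ r i) ∧ 0 < ∑ i, k i ∧ ∑ i, k i < h ∧
      (∑ i, (r i - k i)) % h = k' := by
  obtain ⟨k, hkr, hks⟩ :=
    univ.exists_le_sum_eq r (m := (∑ i, r i) % h - k') (tsub_le_self.trans (Nat.mod_le _ h))
  have hlt : (∑ i, r i) % h < h := Nat.mod_lt _ hh
  refine ⟨k, hkr, by omega, by omega, ?_⟩
  rw [sum_tsub_distrib _ fun i _ => hkr i, hks]
  exact Nat.sub_sub_mod_mod_eq hk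

/-- combinatorial lemma: one can remove `k_i ≤ r_i` tokens with
`0 < Σ k_i < h` to realize any residue `k' < (Σ r_i) mod h`. -/
theorem cyclic_move_exists (n h : ℕ) (hh : 0 < h) (r : Fin n → ℕ)
    (hr : ∀ i, r i < h) (k' : ℕ) (hk : k' < (∑ i, r i) % h) :
    ∃ k : Fin n → ℕ, (∀ i, k i ≤ r i) ∧ 0 < ∑ i, k i ∧ ∑ i, k i < h ∧
      (∑ i, (r i - k i)) % h = k' :=
  cyclic_move_exists_general n h hh r k' hk
end
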